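/- Let (𝓕, μ) be a weakly thinnable pair on [0,∞). Then for every A ∈ 𝓕 and every C > 1, one has μ(A) ≤ C · sup_{j∈ℕ} τ_A(C, j). -/

import Mathlib

/-!
Let `t = sup_j τ_A(C, j)`. Summing `A` over the blocks `[C^j, C^{j+1})` gives
`S_A(y) ≤ C t y + 1`. For rational `q ∈ (C t, 1)` compare `A` with the periodic set
`B_q = ⋃_k [k, k + q)`: thinning by `[c, ∞)` translates `A` to the right by `c` without changing
`μ` (P1, P3), and for `c = q + 1/q` the translate satisfies `S ≤ S_{B_q}`, so `μ(A) ≤ μ(B_q)`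
by P2. Finally `μ(B_q) = q`: for `q = a/b` the set `B_q` is the disjoint union of `a`
translates of `B_{1/b}`, each of the same measure by thinning, and `b` of them make up
`B_1 = [0, ∞)`.
-/

open MeasureTheory Filter Set Topology

noncomputable section

namespace UPN

/-- The half line `[0,∞)` viewed as a subset of `ℝ`. -/
def Ray : Set ℝ := Set.Ici 0

/-- The indicator function `1_A`. -/
def ind (A : Set ℝ) : ℝ → ℝ := Set.indicator A fun _ => (1 : ℝ)

/-- The collection `𝓜` of countable unions `⋃ᵢ [a_{2i-1}, a_{2i})` for a
nondecreasing nonnegative sequence `a`. -/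
def Mcal : Set (Set ℝ) :=
  {A | ∃ a : ℕ → ℝ, 0 ≤ a 0 ∧ Monotone a ∧
        A = ⋃ i : ℕ, Set.Ico (a (2 * i)) (a (2 * i + 1))}

/-- The density function `ρ_A`: `ρ_A(0) = 0` and `ρ_A(x) = (1/x)∫₀ˣ 1_A(y) dy`. -/
def rho (A : Set ℝ) (x : ℝ) : ℝ :=
  if x = 0 then 0 else (1 / x) * ∫ y in (0:ℝ)..x, ind A y

/-- The collection `𝓒` of elements of `𝓜` having natural density. -/
def Ccal : Set (Set ℝ) :=
  {A | A ∈ Mcal ∧ ∃ l : ℝ, Tendsto (rho A) atTop (𝓝 l)}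

/-- The natural density `λ(A) = lim_{x→∞} ρ_A(x)`. -/
def lam (A : Set ℝ) : ℝ := limUnder atTop (rho A)

/-- `S_A(x) = m(A ∩ [0,x))`. -/
def Sfn (A : Set ℝ) (x : ℝ) : ℝ := (volume (A ∩ Set.Ico 0 x)).toReal

/-- The thinning operation `A ∘ B = {x : x ∈ A ∧ S_A(x) ∈ B}`. -/
def thin (A B : Set ℝ) : Set ℝ := {x | x ∈ A ∧ Sfn A x ∈ B}

/-- An f-system on `[0,∞)`: a nonempty collection of subsets of `[0,∞)` closed
under complements (in `[0,∞)`) and finite disjoint unions. -/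
structure IsFSystem (F : Set (Set ℝ)) : Prop where
  nonempty : F.Nonempty
  subset_ray : ∀ A ∈ F, A ⊆ Ray
  compl_mem : ∀ A ∈ F, Ray \ A ∈ F
  union_mem : ∀ A ∈ F, ∀ B ∈ F, A ∩ B = ∅ → A ∪ B ∈ F

/-- A probability pair `(F, μ)` on `[0,∞)`: `F` is an f-system and `μ` is a finitely
additive probability measure on `F` with values in `[0,1]` and `μ([0,∞)) = 1`. -/
structure IsProbPair (F : Set (Set ℝ)) (μ : Set ℝ → ℝ) : Prop where
  fsystem : IsFSystem F
  nonneg : ∀ A ∈ F, 0 ≤ μ A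
  le_one : ∀ A ∈ F, μ A ≤ 1
  ray_eq_one : μ Ray = 1
  additive : ∀ A ∈ F, ∀ B ∈ F, A ∩ B = ∅ → μ (A ∪ B) = μ A + μ B

/-- A weakly thinnable pair (WTP). -/
structure IsWTP (F : Set (Set ℝ)) (μ : Set ℝ → ℝ) : Prop where
  pair : IsProbPair F μ
  Ccal_subset : Ccal ⊆ F
  subset_Mcal : F ⊆ Mcal
  P1 : ∀ C ∈ Ccal, ∀ A ∈ F, thin C A ∈ F ∧ μ (thin C A) = μ C * μ A
  P2 : ∀ A ∈ F, ∀ B ∈ F, (∀ x : ℝ, Sfn B x ≤ Sfn A x) → μ B ≤ μ A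
  P3 : ∀ c : ℝ, 0 ≤ c → μ (Set.Ici c) = 1

/-- Coherence of a probability measure `μ` on an f-system `F` on `[0,∞)`. -/
def Coherent (F : Set (Set ℝ)) (μ : Set ℝ → ℝ) : Prop :=
  ∀ (n : ℕ) (a : Fin n → ℝ) (A : Fin n → Set ℝ), (∀ i, A i ∈ F) →
    0 ≤ ⨆ x : Ray, ∑ i, a i * (ind (A i) ↑x - μ (A i))

/-- `σ_A(D,x) = (1/D) ∫_x^{x+D} 1_A(y) dy`. -/
def sigmaFn (A : Set ℝ) (D x : ℝ) : ℝ := (1 / D) * ∫ y in x..(x + D), ind A y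

/-- `U(A) = limsup_{D→∞} sup_{x>0} σ_A(D,x)`. -/
def Ufn (A : Set ℝ) : ℝ :=
  limsup (fun D => ⨆ x : Set.Ioi (0:ℝ), sigmaFn A D ↑x) atTop

/-- `L(A) = liminf_{D→∞} inf_{x>0} σ_A(D,x)`. -/
def Lfn (A : Set ℝ) : ℝ :=
  liminf (fun D => ⨅ x : Set.Ioi (0:ℝ), sigmaFn A D ↑x) atTop

/-- `𝓦^uni = {A ∈ 𝓜 : L(A) = U(A)}`. -/
def Wuni : Set (Set ℝ) := {A | A ∈ Mcal ∧ Lfn A = Ufn A}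

/-- `log(A) = {log a : a ∈ A ∩ [1,∞)}`. -/
def logSet (A : Set ℝ) : Set ℝ := Real.log '' (A ∩ Set.Ici 1)

/-- `𝓐^uni = {A ∈ 𝓜 : log(A) ∈ 𝓦^uni}`. -/
def Auni : Set (Set ℝ) := {A | A ∈ Mcal ∧ logSet A ∈ Wuni}

/-- `α(A) = λ(log(A))`. -/
def alphaFn (A : Set ℝ) : ℝ := lam (logSet A)

/-- `ξ_A(D,x) = (1/log D) ∫_x^{Dx} ρ_A(y)/y dy`. -/
def xi (A : Set ℝ) (D x : ℝ) : ℝ :=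
  (1 / Real.log D) * ∫ y in x..(D * x), rho A y / y

/-- Membership in `𝓟`: `s` is a sequence in `(1,∞)` tending to `∞` and `f` is a
sequence in `(1,∞)`. -/
def memP (s f : ℕ → ℝ) : Prop :=
  (∀ n, 1 < s n) ∧ Tendsto s atTop atTop ∧ ∀ n, 1 < f n

/-- `𝓐^{s,f} = {A ∈ 𝓜 : lim_n ξ_A(s_n,f_n) exists}`. -/
def Asf (s f : ℕ → ℝ) : Set (Set ℝ) :=
  {A | A ∈ Mcal ∧ ∃ l : ℝ, Tendsto (fun n => xi A (s n) (f n)) atTop (𝓝 l)}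

/-- `α^{s,f}(A) = lim_n ξ_A(s_n,f_n)`. -/
def alphasf (s f : ℕ → ℝ) (A : Set ℝ) : ℝ :=
  limUnder atTop fun n => xi A (s n) (f n)

/-- `τ_A(C,j)`; here `j : ℕ` starting from `0` corresponds to the interval
`[C^j, C^{j+1})`, i.e. to the paper's `τ_A(C, j+1)`. -/
def tau (A : Set ℝ) (C : ℝ) (j : ℕ) : ℝ :=
  (1 / (C ^ j * (C - 1))) * ∫ y in (C ^ j : ℝ)..(C ^ (j + 1)), ind A y

/-- `U^*(C,A) = limsup_{n→∞} sup_k (1/n) Σ_{j=k}^{k+n-1} τ_A(C,j)`. -/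
def Ustar (C : ℝ) (A : Set ℝ) : ℝ :=
  limsup (fun n : ℕ => ⨆ k : ℕ, (1 / (n : ℝ)) * ∑ i ∈ Finset.range n, tau A C (k + i)) atTop

lemma measurableSet_of_mem_Mcal {A : Set ℝ} (hA : A ∈ Mcal) : MeasurableSet A := by
  obtain ⟨a, -, -, rfl⟩ := hA
  exact .iUnion fun _ => measurableSet_Ico

section Sfn

variable {A : Set ℝ}

lemma volume_inter_Ico_ne_top (A : Set ℝ) (a b : ℝ) : volume (A ∩ Ico a b) ≠ ⊤ :=
  ((measure_mono inter_subset_right).trans_lt measure_Ico_lt_top).ne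

lemma Sfn_nonneg (A : Set ℝ) (x : ℝ) : 0 ≤ Sfn A x := ENNReal.toReal_nonneg

lemma Sfn_of_nonpos {x : ℝ} (hx : x ≤ 0) : Sfn A x = 0 := by
  rw [Sfn, Ico_eq_empty hx.not_gt, inter_empty, measure_empty, ENNReal.toReal_zero]

lemma Sfn_mono (A : Set ℝ) : Monotone (Sfn A) := fun _ _ hxy =>
  measureReal_mono (inter_subset_inter_right A (Ico_subset_Ico_right hxy))
    (volume_inter_Ico_ne_top A _ _)

lemma Sfn_le_self {x : ℝ} (hx : 0 ≤ x) : Sfn A x ≤ x :=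
  (measureReal_mono inter_subset_right measure_Ico_lt_top.ne).trans
    (by rw [Real.volume_real_Ico_of_le hx, sub_zero])

lemma integral_ind (hA : MeasurableSet A) {a b : ℝ} (hab : a ≤ b) :
    ∫ y in a..b, ind A y = volume.real (A ∩ Ico a b) := by
  rw [intervalIntegral.integral_of_le hab, ← setIntegral_congr_set Ico_ae_eq_Ioc, ind,
    setIntegral_indicator hA, setIntegral_const, smul_eq_mul, mul_one, inter_comm]

lemma Sfn_eq_integral (hA : MeasurableSet A) {x : ℝ} (hx : 0 ≤ x) :
    Sfn A x = ∫ y in (0 : ℝ)..x, ind A y :=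
  (integral_ind hA hx).symm

lemma intervalIntegrable_ind (hA : MeasurableSet A) (a b : ℝ) :
    IntervalIntegrable (ind A) volume a b :=
  intervalIntegrable_iff.2 ((integrableOn_const measure_Ioc_lt_top.ne).indicator hA)

lemma rho_eq_Sfn_div (hA : MeasurableSet A) {x : ℝ} (hx : 0 < x) : rho A x = Sfn A x / x := by
  rw [rho, if_neg hx.ne', Sfn_eq_integral hA hx.le, one_div_mul_eq_div]

lemma tendsto_rho_of_abs_Sfn_sub_le (hA : MeasurableSet A) {d e : ℝ}
    (h : ∀ x, 0 ≤ x → |Sfn A x - d * x| ≤ e) : Tendsto (rho A) atTop (𝓝 d) := by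
  rw [tendsto_iff_norm_sub_tendsto_zero]
  refine squeeze_zero' (.of_forall fun _ => norm_nonneg _) ?_
    (tendsto_const_nhds (x := e).div_atTop tendsto_id)
  filter_upwards [eventually_gt_atTop 0] with x hx
  rw [rho_eq_Sfn_div hA hx, Real.norm_eq_abs, div_sub' hx.ne', abs_div, abs_of_pos hx, mul_comm]
  exact div_le_div_of_nonneg_right (h x hx.le) hx.le

end Sfn

def periodicIco (o d : ℝ) : Set ℝ := ⋃ k : ℕ, Ico ((k : ℝ) + o) (k + o + d)

section periodicIco

variable {o d : ℝ}

lemma periodicIco_mem_Mcal (ho : 0 ≤ o) (hd : 0 ≤ d) (hd1 : d ≤ 1) :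
    periodicIco o d ∈ Mcal := by
  refine ⟨fun n => ((n / 2 : ℕ) : ℝ) + o + ((n % 2 : ℕ) : ℝ) * d, by simpa, ?_, ?_⟩
  · refine monotone_nat_of_le_succ fun n => ?_
    rcases Nat.even_or_odd' n with ⟨m, rfl | rfl⟩
    · have h1 : (2 * m + 1) / 2 = m := by omega
      have h2 : (2 * m + 1) % 2 = 1 := by omega
      simp [h1, h2, hd]
    · have h1 : (2 * m + 1) / 2 = m := by omega
      have h2 : (2 * m + 1 + 1) / 2 = m + 1 := by omega
      have h3 : (2 * m + 1) % 2 = 1 := by omega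
      have h4 : (2 * m + 1 + 1) % 2 = 0 := by omega
      simp only [h1, h2, h3, h4]
      push_cast
      linarith
  · refine iUnion_congr fun i => ?_
    have h1 : (2 * i + 1) / 2 = i := by omega
    have h2 : (2 * i + 1) % 2 = 1 := by omega
    simp [h1, h2]

lemma volume_real_biUnion_Ico (hd : 0 ≤ d) (hd1 : d ≤ 1) (n : ℕ) :
    volume.real (⋃ k ∈ Finset.range n, Ico ((k : ℝ) + o) (k + o + d)) = n * d := by
  rw [measureReal_biUnion_finset ?_ (fun _ _ => measurableSet_Ico)
    fun _ _ => measure_Ico_lt_top.ne]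
  · simp [hd]
  · intro k _ l _ hkl
    rw [Function.onFun, Ico_disjoint_Ico]
    rcases hkl.lt_or_gt with h | h
    · have : (k : ℝ) + 1 ≤ l := by exact_mod_cast h
      exact (min_le_left _ _).trans ((by linarith : _ ≤ (l : ℝ) + o).trans (le_max_right _ _))
    · have : (l : ℝ) + 1 ≤ k := by exact_mod_cast h
      exact (min_le_right _ _).trans ((by linarith : _ ≤ (k : ℝ) + o).trans (le_max_left _ _))

lemma Sfn_periodicIco_ge (ho : 0 ≤ o) (hd : 0 ≤ d) (hd1 : d ≤ 1) (x : ℝ) :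
    d * (x - o - d) ≤ Sfn (periodicIco o d) x := by
  set n := ⌈x - o - d⌉₊
  have hsub : (⋃ k ∈ Finset.range n, Ico ((k : ℝ) + o) (k + o + d)) ⊆
      periodicIco o d ∩ Ico 0 x := by
    simp only [iUnion_subset_iff, Finset.mem_range]
    intro k hk y hy
    have := Nat.lt_ceil.1 hk
    exact ⟨mem_iUnion.2 ⟨k, hy⟩, (add_nonneg k.cast_nonneg ho).trans hy.1,
      by linarith [hy.2]⟩
  calc d * (x - o - d) ≤ n * d := by
        rw [mul_comm]; exact mul_le_mul_of_nonneg_right (Nat.le_ceil _) hd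
    _ = _ := (volume_real_biUnion_Ico hd hd1 n).symm
    _ ≤ Sfn (periodicIco o d) x := measureReal_mono hsub (volume_inter_Ico_ne_top _ _ _)

lemma Sfn_periodicIco_le (ho : 0 ≤ o) (hd : 0 ≤ d) {x : ℝ} (hx : 0 ≤ x) :
    Sfn (periodicIco o d) x ≤ d * (x + 1) := by
  have hsub : periodicIco o d ∩ Ico 0 x ⊆
      ⋃ k ∈ Finset.range ⌈x⌉₊, Ico ((k : ℝ) + o) (k + o + d) := by
    rintro y ⟨hy, -, hyx⟩
    obtain ⟨k, hk⟩ := mem_iUnion.1 hy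
    exact mem_biUnion (Finset.mem_range.2 (Nat.lt_ceil.2 (by linarith [hk.1]))) hk
  calc Sfn (periodicIco o d) x
        ≤ volume.real (⋃ k ∈ Finset.range ⌈x⌉₊, Ico ((k : ℝ) + o) (k + o + d)) :=
        measureReal_mono hsub
          (measure_biUnion_lt_top (Finset.finite_toSet _) fun _ _ => measure_Ico_lt_top).ne
    _ ≤ ∑ k ∈ Finset.range ⌈x⌉₊, volume.real (Ico ((k : ℝ) + o) (k + o + d)) :=
        measureReal_biUnion_finset_le _ _
    _ = ⌈x⌉₊ * d := by simp [hd]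
    _ ≤ d * (x + 1) := by
        rw [mul_comm]; exact mul_le_mul_of_nonneg_left (Nat.ceil_lt_add_one hx).le hd

lemma periodicIco_mem_Ccal (ho : 0 ≤ o) (hd : 0 ≤ d) (hd1 : d ≤ 1) :
    periodicIco o d ∈ Ccal := by
  refine ⟨periodicIco_mem_Mcal ho hd hd1, d,
    tendsto_rho_of_abs_Sfn_sub_le (A := periodicIco o d) (e := d * (o + 1))
    (.iUnion fun _ => measurableSet_Ico) fun x hx => abs_sub_le_iff.2 ⟨?_, ?_⟩⟩
  · nlinarith [Sfn_periodicIco_le ho hd hx]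
  · nlinarith [Sfn_periodicIco_ge ho hd hd1 x]

lemma Ici_eq_periodicIco (c : ℝ) : Ici c = periodicIco c 1 := by
  ext x
  simp only [periodicIco, mem_Ici, mem_iUnion, mem_Ico]
  constructor
  · intro hx
    refine ⟨⌊x - c⌋₊, ?_, ?_⟩
    · linarith [Nat.floor_le (sub_nonneg.2 hx)]
    · linarith [Nat.lt_floor_add_one (x - c)]
  · rintro ⟨k, hk, -⟩
    linarith [k.cast_nonneg (α := ℝ)]

lemma Ici_mem_Ccal {c : ℝ} (hc : 0 ≤ c) : Ici c ∈ Ccal :=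
  Ici_eq_periodicIco c ▸ periodicIco_mem_Ccal hc zero_le_one le_rfl

lemma periodicIco_union {e : ℝ} (hd : 0 ≤ d) (he : 0 ≤ e) :
    periodicIco o d ∪ periodicIco (o + d) e = periodicIco o (d + e) := by
  ext x
  simp only [periodicIco, mem_union, mem_iUnion, mem_Ico]
  constructor
  · rintro (⟨k, h1, h2⟩ | ⟨k, h1, h2⟩) <;> exact ⟨k, by linarith, by linarith⟩
  · rintro ⟨k, h1, h2⟩
    by_cases h : x < k + o + d
    · exact Or.inl ⟨k, h1, h⟩
    · exact Or.inr ⟨k, by linarith, by linarith⟩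

lemma disjoint_periodicIco {o' d' : ℝ} (h : o + d ≤ o') (h' : o' + d' ≤ o + 1) :
    Disjoint (periodicIco o d) (periodicIco o' d') := by
  simp only [periodicIco, disjoint_iUnion_left, disjoint_iUnion_right]
  intro l k
  rw [disjoint_left]
  rintro x ⟨hk1, hk2⟩ ⟨hl1, hl2⟩
  have hkl : (k : ℝ) < l + 1 := by linarith
  have hlk : (l : ℝ) < k := by linarith
  have : k < l + 1 := by exact_mod_cast hkl
  have : l < k := by exact_mod_cast hlk
  omega

end periodicIco

section thin

variable {c : ℝ}

lemma Sfn_Ici (hc : 0 ≤ c) {x : ℝ} (hx : c ≤ x) : Sfn (Ici c) x = x - c := by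
  rw [Sfn, ← Ici_inter_Iio (a := (0 : ℝ)), ← inter_assoc, Ici_inter_Ici, sup_eq_left.2 hc,
    Ici_inter_Iio, ← measureReal_def, Real.volume_real_Ico_of_le hx]

lemma thin_Ici (hc : 0 ≤ c) (B : Set ℝ) : thin (Ici c) B = {x | c ≤ x ∧ x - c ∈ B} := by
  ext x
  simp only [thin, mem_ofPred_eq, mem_Ici]
  exact and_congr_right fun hx => by rw [Sfn_Ici hc hx]

lemma thin_Ici_periodicIco (hc : 0 ≤ c) {o : ℝ} (ho : 0 ≤ o) (d : ℝ) :
    thin (Ici c) (periodicIco o d) = periodicIco (c + o) d := by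
  rw [thin_Ici hc]
  ext x
  simp only [periodicIco, mem_ofPred_eq, mem_iUnion, mem_Ico]
  constructor
  · rintro ⟨-, k, h1, h2⟩
    exact ⟨k, by linarith, by linarith⟩
  · rintro ⟨k, h1, h2⟩
    exact ⟨by linarith [k.cast_nonneg (α := ℝ)], k, by linarith, by linarith⟩

lemma Sfn_thin_Ici (hc : 0 ≤ c) (A : Set ℝ) (x : ℝ) :
    Sfn (thin (Ici c) A) x = Sfn A (x - c) := by
  have : thin (Ici c) A ∩ Ico 0 x = (fun y => -c + y) ⁻¹' (A ∩ Ico 0 (x - c)) := by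
    rw [thin_Ici hc]
    ext y
    simp only [mem_inter_iff, mem_ofPred_eq, mem_Ico, mem_preimage, neg_add_eq_sub]
    constructor
    · rintro ⟨⟨h1, h2⟩, -, h3⟩
      exact ⟨h2, by linarith, by linarith⟩
    · rintro ⟨h1, h2, h3⟩
      exact ⟨⟨by linarith, h1⟩, by linarith, by linarith⟩
  rw [Sfn, this, measure_preimage_add, Sfn]

end thin

namespace IsWTP

variable {F : Set (Set ℝ)} {μ : Set ℝ → ℝ}

lemma thin_Ici_mem (hW : IsWTP F μ) {c : ℝ} (hc : 0 ≤ c) {B : Set ℝ} (hB : B ∈ F) :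
    thin (Ici c) B ∈ F :=
  (hW.P1 _ (Ici_mem_Ccal hc) B hB).1

lemma measure_thin_Ici (hW : IsWTP F μ) {c : ℝ} (hc : 0 ≤ c) {B : Set ℝ} (hB : B ∈ F) :
    μ (thin (Ici c) B) = μ B := by
  rw [(hW.P1 _ (Ici_mem_Ccal hc) B hB).2, hW.P3 c hc, one_mul]


lemma measure_periodicIco_eq (hW : IsWTP F μ) {c d : ℝ} (hc : 0 ≤ c) (hd : 0 ≤ d)
    (hd1 : d ≤ 1) : μ (periodicIco c d) = μ (periodicIco 0 d) := by
  rw [← hW.measure_thin_Ici hc (hW.Ccal_subset (periodicIco_mem_Ccal le_rfl hd hd1)),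
    thin_Ici_periodicIco hc le_rfl, add_zero]

lemma measure_periodicIco_nat_mul (hW : IsWTP F μ) {d : ℝ} (hd : 0 ≤ d) {n : ℕ}
    (hn : 1 ≤ n) (hnd : n * d ≤ 1) : μ (periodicIco 0 (n * d)) = n * μ (periodicIco 0 d) := by
  induction n, hn using Nat.le_induction with
  | base => simp
  | succ n hn ih =>
    push_cast at hnd ⊢
    have hnd0 : 0 ≤ (n : ℝ) * d := by positivity
    have hmem : ∀ {o e : ℝ}, 0 ≤ o → 0 ≤ e → o + e ≤ 1 → periodicIco o e ∈ F :=
      fun ho he hoe => hW.Ccal_subset (periodicIco_mem_Ccal ho he (by linarith))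
    have hdisj := disjoint_periodicIco (o := 0) (d := n * d) (d' := d) le_rfl (by linarith)
    rw [add_mul, one_mul, ← periodicIco_union hnd0 hd,
      hW.pair.additive _ (hmem le_rfl hnd0 (by linarith)) _ (hmem (by linarith) hd (by linarith))
        (disjoint_iff_inter_eq_empty.1 hdisj),
      ih (by linarith), zero_add, hW.measure_periodicIco_eq hnd0 hd (by linarith)]
    ring

lemma measure_periodicIco_div (hW : IsWTP F μ) {a b : ℕ} (ha : 0 < a) (hab : a ≤ b) :
    μ (periodicIco 0 (a / b)) = a / b := by
  have hb : (0 : ℝ) < b := by exact_mod_cast ha.trans_le hab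
  have hunit : μ (periodicIco 0 (1 / b)) = 1 / b := by
    have h := hW.measure_periodicIco_nat_mul (d := 1 / b) (by positivity) (ha.trans_le hab)
      (by rw [mul_one_div_cancel hb.ne'])
    rw [mul_one_div_cancel hb.ne', ← Ici_eq_periodicIco, hW.P3 0 le_rfl] at h
    field_simp
    linarith
  have hle : (a : ℝ) * (1 / b) ≤ 1 := by
    rw [mul_one_div, div_le_one hb]; exact_mod_cast hab
  rw [div_eq_mul_one_div, hW.measure_periodicIco_nat_mul (by positivity) ha hle, hunit]

lemma measure_le_measure_periodicIco (hW : IsWTP F μ) {A : Set ℝ} (hA : A ∈ F) {s e q : ℝ}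
    (h : ∀ y, 0 ≤ y → Sfn A y ≤ s * y + e) (hsq : s < q) (hq0 : 0 < q) (hq1 : q ≤ 1) :
    μ A ≤ μ (periodicIco 0 q) := by
  have he : 0 ≤ e := by simpa [Sfn_of_nonpos le_rfl] using h 0 le_rfl
  set c := q + e / q
  have hc : 0 ≤ c := by positivity
  have hqc : q * (c - q) = e := by simp only [c, add_sub_cancel_left]; field_simp
  rw [← hW.measure_thin_Ici hc hA]
  refine hW.P2 _ (hW.Ccal_subset (periodicIco_mem_Ccal le_rfl hq0.le hq1)) _
    (hW.thin_Ici_mem hc hA) fun x => ?_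
  rw [Sfn_thin_Ici hc]
  rcases lt_or_ge x c with hx | hx
  · rw [Sfn_of_nonpos (by linarith)]
    exact Sfn_nonneg _ _
  · calc Sfn A (x - c) ≤ s * (x - c) + e := h _ (by linarith)
      _ ≤ q * (x - 0 - q) := by nlinarith [mul_le_mul_of_nonneg_right hsq.le (sub_nonneg.2 hx)]
      _ ≤ Sfn (periodicIco 0 q) x := Sfn_periodicIco_ge le_rfl hq0.le hq1 x

lemma measure_le_of_Sfn_le (hW : IsWTP F μ) {A : Set ℝ} (hA : A ∈ F) {s e : ℝ} (hs : 0 ≤ s)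
    (h : ∀ y, 0 ≤ y → Sfn A y ≤ s * y + e) : μ A ≤ s := by
  refine le_of_forall_lt_rat_imp_le fun q hq => ?_
  rcases le_or_gt 1 (q : ℝ) with hq1 | hq1
  · exact (hW.pair.le_one A hA).trans hq1
  have hq0 : (0 : ℝ) < q := hs.trans_lt hq
  obtain ⟨a, b, ha, hab, hq_eq⟩ : ∃ a b : ℕ, 0 < a ∧ a ≤ b ∧ (q : ℝ) = a / b := by
    have hnum : ((q.num.toNat : ℕ) : ℝ) = q.num := by
      exact_mod_cast Int.toNat_of_nonneg (Rat.num_nonneg.2 (by exact_mod_cast hq0.le))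
    have hb : (0 : ℝ) < q.den := by exact_mod_cast q.den_pos
    rw [Rat.cast_def, ← hnum] at hq0 hq1 ⊢
    refine ⟨_, _, ?_, ?_, rfl⟩
    · exact_mod_cast (div_pos_iff_of_pos_right hb).1 hq0
    · exact_mod_cast ((div_lt_one hb).1 hq1).le
  calc μ A ≤ μ (periodicIco 0 q) := hW.measure_le_measure_periodicIco hA h hq hq0 hq1.le
    _ = q := by rw [hq_eq, hW.measure_periodicIco_div ha hab]

end IsWTP

section tau

variable {A : Set ℝ} {C : ℝ}

lemma tau_mul_eq (hA : MeasurableSet A) (hC : 1 < C) (j : ℕ) :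
    tau A C j * (C ^ j * (C - 1)) = volume.real (A ∩ Ico (C ^ j) (C ^ (j + 1))) := by
  have : C ^ j * (C - 1) ≠ 0 := (mul_pos (by positivity) (by linarith)).ne'
  rw [tau, integral_ind hA (pow_le_pow_right₀ hC.le (j.le_add_right 1)), one_div_mul_eq_div,
    div_mul_cancel₀ _ this]

lemma tau_nonneg (hA : MeasurableSet A) (hC : 1 < C) (j : ℕ) : 0 ≤ tau A C j := by
  rw [tau, integral_ind hA (pow_le_pow_right₀ hC.le (j.le_add_right 1))]
  have : 0 < C ^ j * (C - 1) := mul_pos (by positivity) (by linarith)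
  positivity

lemma tau_le_one (hA : MeasurableSet A) (hC : 1 < C) (j : ℕ) : tau A C j ≤ 1 := by
  have hpos : 0 < C ^ j * (C - 1) := mul_pos (by positivity) (by linarith)
  have := tau_mul_eq hA hC j
  have hvol : volume.real (A ∩ Ico (C ^ j) (C ^ (j + 1))) ≤ C ^ j * (C - 1) := by
    refine (measureReal_mono inter_subset_right measure_Ico_lt_top.ne).trans_eq ?_
    rw [Real.volume_real_Ico_of_le (pow_le_pow_right₀ hC.le (j.le_add_right 1))]
    ring
  nlinarith

lemma Sfn_pow_succ (hA : MeasurableSet A) (hC : 1 < C) (n : ℕ) :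
    Sfn A (C ^ (n + 1)) = Sfn A (C ^ n) + tau A C n * (C ^ n * (C - 1)) := by
  have h0 : ∀ m : ℕ, (0 : ℝ) ≤ C ^ m := fun m => by positivity
  rw [Sfn_eq_integral hA (h0 _), Sfn_eq_integral hA (h0 _), tau_mul_eq hA hC,
    ← integral_ind hA (pow_le_pow_right₀ hC.le (n.le_add_right 1)),
    intervalIntegral.integral_add_adjacent_intervals (intervalIntegrable_ind hA _ _)
      (intervalIntegrable_ind hA _ _)]

lemma Sfn_pow_le (hA : MeasurableSet A) (hC : 1 < C) (n : ℕ) :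
    Sfn A (C ^ n) ≤ 1 + (⨆ j, tau A C j) * (C ^ n - 1) := by
  have hbdd : BddAbove (range (tau A C)) := ⟨1, forall_mem_range.2 (tau_le_one hA hC)⟩
  induction n with
  | zero => simpa using Sfn_le_self (A := A) zero_le_one
  | succ n ih =>
    have hpos : 0 ≤ C ^ n * (C - 1) := mul_nonneg (by positivity) (by linarith)
    have := mul_le_mul_of_nonneg_right (le_ciSup hbdd n) hpos
    rw [Sfn_pow_succ hA hC, pow_succ]
    nlinarith

lemma Sfn_le_mul_iSup_tau_add_one (hA : MeasurableSet A) (hC : 1 < C) {y : ℝ} (hy : 0 ≤ y) :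
    Sfn A y ≤ C * (⨆ j, tau A C j) * y + 1 := by
  have ht : 0 ≤ ⨆ j, tau A C j := Real.iSup_nonneg (tau_nonneg hA hC)
  have hCty : 0 ≤ C * (⨆ j, tau A C j) * y := by positivity
  rcases lt_or_ge y 1 with hy1 | hy1
  · linarith [Sfn_le_self (A := A) hy]
  obtain ⟨J, hJy, hyJ⟩ := exists_nat_pow_near hy1 hC
  calc Sfn A y ≤ Sfn A (C ^ (J + 1)) := Sfn_mono A hyJ.le
    _ ≤ 1 + (⨆ j, tau A C j) * (C ^ (J + 1) - 1) := Sfn_pow_le hA hC (J + 1)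
    _ ≤ C * (⨆ j, tau A C j) * y + 1 := by
        rw [pow_succ]
        nlinarith [mul_le_mul_of_nonneg_left hJy (mul_nonneg (by linarith : (0 : ℝ) ≤ C) ht)]

end tau

/-- For a weakly thinnable pair `(F, μ)`, every `A ∈ F` and every `C > 1`:
`μ(A) ≤ C · sup_{j∈ℕ} τ_A(C,j)`. -/
theorem stmt14 (F : Set (Set ℝ)) (μ : Set ℝ → ℝ) (hWTP : IsWTP F μ)
    (A : Set ℝ) (hA : A ∈ F) (C : ℝ) (hC : 1 < C) :
    μ A ≤ C * ⨆ j : ℕ, tau A C j := by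
  have hAm : MeasurableSet A := measurableSet_of_mem_Mcal (hWTP.subset_Mcal hA)
  have ht : 0 ≤ ⨆ j, tau A C j := Real.iSup_nonneg (tau_nonneg hAm hC)
  exact hWTP.measure_le_of_Sfn_le hA (by positivity) fun y hy =>
    Sfn_le_mul_iSup_tau_add_one hAm hC hy

end UPN
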